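/- arXiv:1610.05027 — 3 statements merged into one kernel-verified Lean document; each statement's English description precedes it below -/
import Mathlib

section
/- If x ∈ M is stable, then its stabilizer G_x is compact. -/
/-!
Replace `x` by the critical point `y = g₀ • x`; its stabilizer is conjugate to `G_x`. At a
critical point each `t ↦ Ψ y (exp (t v))` is convex with zero derivative at `0`, so `Ψ y ≥ 0` on
all of `G` by the Cartan decomposition and `K`-invariance. If `g = k exp v` fixes `y`, the cocycle
identity gives `Ψ y g + Ψ y g⁻¹ = 0`, hence `Ψ y (exp v) = 0`. Convexity then forces
`t ↦ Ψ y (exp (t v))` to vanish on `[0, 1]`, so its second derivative at `0` vanishes and by (P3)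
`exp (ℝ v)` fixes `y`, which stability forbids unless `v = 0`. Thus `G_y ≤ K` is compact.
-/

open Set Filter Topology

lemma ConvexOn.isMinOn_of_deriv_eq_zero {S : Set ℝ} {f : ℝ → ℝ} {x : ℝ} (hf : ConvexOn ℝ S f)
    (hx : x ∈ interior S) (hfx : DifferentiableAt ℝ f x) (hf' : deriv f x = 0) :
    IsMinOn f S x :=
  hf.isMinOn_of_rightDeriv_eq_zero hx <| by
    rw [hfx.derivWithin (uniqueDiffWithinAt_Ioi x), hf']

lemma ConvexOn.eqOn_Icc_of_le {f : ℝ → ℝ} {a b c : ℝ} (hf : ConvexOn ℝ (Icc a b) f)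
    (ha : f a = c) (hb : f b = c) (hc : ∀ t ∈ Icc a b, c ≤ f t) :
    EqOn f (fun _ => c) (Icc a b) := by
  intro t ht
  have hab : a ≤ b := ht.1.trans ht.2
  have := hf.le_on_segment (left_mem_Icc.2 hab) (right_mem_Icc.2 hab)
    (by rwa [segment_eq_Icc hab])
  rw [ha, hb, max_self] at this
  exact le_antisymm this (hc t ht)

lemma deriv_eq_zero_of_eventuallyEq_const_nhdsGE {f : ℝ → ℝ} {a c : ℝ}
    (hf : f =ᶠ[𝓝[≥] a] fun _ => c) : deriv f a = 0 := by
  by_cases hfa : DifferentiableAt ℝ f a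
  · rw [← hfa.derivWithin (uniqueDiffWithinAt_Ici a),
      hf.derivWithin_eq (hf.eq_of_nhdsWithin self_mem_Ici), derivWithin_fun_const, Pi.zero_apply]
  · exact deriv_zero_of_not_differentiableAt hfa

lemma deriv_eventuallyEq_zero_nhdsGE {f : ℝ → ℝ} {a c : ℝ}
    (hf : f =ᶠ[𝓝[≥] a] fun _ => c) : deriv f =ᶠ[𝓝[≥] a] fun _ => 0 := by
  rw [EventuallyEq, ← eventually_eventually_nhdsWithin] at hf
  filter_upwards [hf, self_mem_nhdsWithin] with b hfb hab
  exact deriv_eq_zero_of_eventuallyEq_const_nhdsGE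
    (nhdsWithin_mono b (Ici_subset_Ici.2 hab) hfb)

lemma iteratedDeriv_two_eq_zero_of_eventuallyEq_const_nhdsGE {f : ℝ → ℝ} {a c : ℝ}
    (hf : f =ᶠ[𝓝[≥] a] fun _ => c) : iteratedDeriv 2 f a = 0 := by
  rw [iteratedDeriv_succ, iteratedDeriv_one]
  exact deriv_eq_zero_of_eventuallyEq_const_nhdsGE (deriv_eventuallyEq_zero_nhdsGE hf)

lemma IsCompact.stabilizer_smul {G α : Type*} [Group G] [TopologicalSpace G]
    [IsTopologicalGroup G] [MulAction G α] {a : α}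
    (ha : IsCompact (MulAction.stabilizer G a : Set G)) (g : G) :
    IsCompact (MulAction.stabilizer G (g • a) : Set G) := by
  rw [MulAction.stabilizer_smul_eq_stabilizer_map_conj, Subgroup.coe_map]
  exact ha.image ((continuous_mul_const g⁻¹).comp (continuous_const_mul g))

section KempfNess

variable {G M p : Type*} [Group G] [NormedAddCommGroup p] [NormedSpace ℝ p]
  {K : Subgroup G} {expG : p → G} {Ψ : M → G → ℝ} {y : M}

lemma kempfNess_exp_smul_nonneg (hexp0 : expG 0 = 1) (hone : Ψ y 1 = 0) {v : p}
    (hP1 : Differentiable ℝ fun t : ℝ => Ψ y (expG (t • v)))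
    (hP3convex : ConvexOn ℝ univ fun t : ℝ => Ψ y (expG (t • v)))
    (hcrit : deriv (fun t : ℝ => Ψ y (expG (t • v))) 0 = 0) (t : ℝ) :
    0 ≤ Ψ y (expG (t • v)) := by
  have hmin := hP3convex.isMinOn_of_deriv_eq_zero (by simp) (hP1 0) hcrit (mem_univ t)
  simpa [hexp0, hone] using hmin

lemma kempfNess_nonneg_of_critical (hexp0 : expG 0 = 1) (hone : Ψ y 1 = 0)
    (hCartan : ∀ g : G, ∃ k ∈ K, ∃ v : p, g = k * expG v)
    (hP1 : ∀ v : p, Differentiable ℝ fun t : ℝ => Ψ y (expG (t • v)))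
    (hP2 : ∀ k g : G, k ∈ K → Ψ y (k * g) = Ψ y g)
    (hP3convex : ∀ v : p, ConvexOn ℝ univ fun t : ℝ => Ψ y (expG (t • v)))
    (hcrit : ∀ v : p, deriv (fun t : ℝ => Ψ y (expG (t • v))) 0 = 0) (g : G) :
    0 ≤ Ψ y g := by
  obtain ⟨k, hk, v, rfl⟩ := hCartan g
  simpa [hP2 k _ hk] using
    kempfNess_exp_smul_nonneg hexp0 hone (hP1 v) (hP3convex v) (hcrit v) 1

variable [MulAction G M]

lemma kempfNess_one_eq_zero (hP4 : ∀ g h : G, Ψ y g + Ψ (g • y) h = Ψ y (h * g)) :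
    Ψ y 1 = 0 := by
  simpa using hP4 1 1

lemma kempfNess_add_inv_eq_zero (hP4 : ∀ g h : G, Ψ y g + Ψ (g • y) h = Ψ y (h * g))
    {g : G} (hg : g ∈ MulAction.stabilizer G y) : Ψ y g + Ψ y g⁻¹ = 0 := by
  simpa [MulAction.mem_stabilizer_iff.1 hg, kempfNess_one_eq_zero hP4] using hP4 g g⁻¹

lemma smul_eq_of_kempfNess_exp_eq_zero (hexp0 : expG 0 = 1) (hone : Ψ y 1 = 0) {v : p}
    (hP3convex : ConvexOn ℝ univ fun t : ℝ => Ψ y (expG (t • v)))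
    (hP3strict : iteratedDeriv 2 (fun t : ℝ => Ψ y (expG (t • v))) 0 = 0 ↔
      ∀ t : ℝ, expG (t • v) • y = y)
    (hnonneg : ∀ t : ℝ, 0 ≤ Ψ y (expG (t • v))) (hv : Ψ y (expG v) = 0) (t : ℝ) :
    expG (t • v) • y = y := by
  have hIcc : EqOn (fun t : ℝ => Ψ y (expG (t • v))) (fun _ => 0) (Icc 0 1) :=
    (hP3convex.subset (subset_univ _) (convex_Icc 0 1)).eqOn_Icc_of_le
      (by simp [hexp0, hone]) (by simpa using hv) fun t _ => hnonneg t
  refine hP3strict.1 (iteratedDeriv_two_eq_zero_of_eventuallyEq_const_nhdsGE (c := 0) ?_) t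
  exact mem_of_superset (Icc_mem_nhdsGE one_pos) hIcc

lemma stabilizer_le_of_critical (hexp0 : expG 0 = 1)
    (hCartan : ∀ g : G, ∃ k ∈ K, ∃ v : p, g = k * expG v)
    (hP1 : ∀ v : p, Differentiable ℝ fun t : ℝ => Ψ y (expG (t • v)))
    (hP2 : ∀ k g : G, k ∈ K → Ψ y (k * g) = Ψ y g)
    (hP3convex : ∀ v : p, ConvexOn ℝ univ fun t : ℝ => Ψ y (expG (t • v)))
    (hP3strict : ∀ v : p, iteratedDeriv 2 (fun t : ℝ => Ψ y (expG (t • v))) 0 = 0 ↔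
      ∀ t : ℝ, expG (t • v) • y = y)
    (hP4 : ∀ g h : G, Ψ y g + Ψ (g • y) h = Ψ y (h * g))
    (hcrit : ∀ v : p, deriv (fun t : ℝ => Ψ y (expG (t • v))) 0 = 0)
    (hnofix : ∀ v : p, v ≠ 0 → ¬ ∀ t : ℝ, expG (t • v) • y = y) :
    MulAction.stabilizer G y ≤ K := by
  intro g hg
  have hone := kempfNess_one_eq_zero hP4
  have hnonneg := kempfNess_nonneg_of_critical hexp0 hone hCartan hP1 hP2 hP3convex hcrit
  have hg0 : Ψ y g = 0 := by
    linarith [kempfNess_add_inv_eq_zero hP4 hg, hnonneg g, hnonneg g⁻¹]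
  obtain ⟨k, hk, v, rfl⟩ := hCartan g
  obtain rfl : v = 0 := by
    by_contra hv
    refine hnofix v hv (smul_eq_of_kempfNess_exp_eq_zero hexp0 hone (hP3convex v)
      (hP3strict v) (fun t => hnonneg _) ?_)
    rwa [hP2 k _ hk] at hg0
  simpa [hexp0] using hk

end KempfNess

theorem stabilizer_compact_of_stable_general
    {G M p : Type*} [Group G] [TopologicalSpace G] [IsTopologicalGroup G]
    [MulAction G M] [NormedAddCommGroup p] [NormedSpace ℝ p]
    (K : Subgroup G) (expG : p → G) (Ψ : M → G → ℝ)
    (hexp0 : expG 0 = 1)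
    (hKcompact : IsCompact (K : Set G))
    -- stabilizers are closed (continuity of the action)
    (hclosed : ∀ y : M, IsClosed ((MulAction.stabilizer G y : Subgroup G) : Set G))
    (hCartan : ∀ g : G, ∃ k ∈ K, ∃ v : p, g = k * expG v)
    (hP1 : ∀ (x : M) (v : p), Differentiable ℝ fun t : ℝ => Ψ x (expG (t • v)))
    (hP2 : ∀ (x : M) (k g : G), k ∈ K → Ψ x (k * g) = Ψ x g)
    (hP3convex : ∀ (x : M) (v : p),
      ConvexOn ℝ Set.univ fun t : ℝ => Ψ x (expG (t • v)))
    (hP3strict : ∀ (x : M) (v : p),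
      iteratedDeriv 2 (fun t : ℝ => Ψ x (expG (t • v))) 0 = 0 ↔
        ∀ t : ℝ, expG (t • v) • x = x)
    (hP4 : ∀ (x : M) (g h : G), Ψ x g + Ψ (g • x) h = Ψ x (h * g))
    (x : M)
    -- `x` is stable
    (hstable : ∃ g : G,
      (∀ v : p, deriv (fun t : ℝ => Ψ (g • x) (expG (t • v))) 0 = 0) ∧
      ∀ (h : G) (v : p), v ≠ 0 → ¬ (∀ t : ℝ, (h * expG (t • v) * h⁻¹) • x = x)) :
    IsCompact ((MulAction.stabilizer G x : Subgroup G) : Set G) := by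
  obtain ⟨g₀, hcrit, hnofix⟩ := hstable
  have hnofix' : ∀ v : p, v ≠ 0 → ¬ ∀ t : ℝ, expG (t • v) • g₀ • x = g₀ • x :=
    fun v hv hfix => hnofix g₀⁻¹ v hv fun t => by
      rw [mul_smul, mul_smul, inv_inv, hfix t, inv_smul_smul]
  have hle : MulAction.stabilizer G (g₀ • x) ≤ K :=
    stabilizer_le_of_critical hexp0 hCartan (hP1 _) (hP2 _) (hP3convex _) (hP3strict _) (hP4 _)
      hcrit hnofix'
  simpa using (hKcompact.of_isClosed_subset (hclosed _) hle).stabilizer_smul g₀⁻¹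

/-- If `x ∈ M` is stable (i.e. `F(g·x) = 0` for some `g` and the
stabilizer algebra is conjugate into `k`, so that no conjugate one-parameter group
`exp(ℝv)`, `v ∈ p \ {0}`, fixes `x`), then the stabilizer `G_x` is compact. -/
theorem stabilizer_compact_of_stable
    {G M p : Type*} [Group G] [TopologicalSpace G] [IsTopologicalGroup G]
    [MulAction G M] [NormedAddCommGroup p] [NormedSpace ℝ p]
    (K : Subgroup G) (expG : p → G) (Ad : G → p →ₗ[ℝ] p) (Ψ : M → G → ℝ)
    (hexp0 : expG 0 = 1)
    (hKcompact : IsCompact (K : Set G))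
    -- stabilizers are closed (continuity of the action)
    (hclosed : ∀ y : M, IsClosed ((MulAction.stabilizer G y : Subgroup G) : Set G))
    (hCartan : ∀ g : G, ∃ k ∈ K, ∃ v : p, g = k * expG v)
    (hAd : ∀ k : G, k ∈ K → ∀ v : p, k⁻¹ * expG v * k = expG (Ad k⁻¹ v))
    (hP1 : ∀ (x : M) (v : p), Differentiable ℝ fun t : ℝ => Ψ x (expG (t • v)))
    (hP2 : ∀ (x : M) (k g : G), k ∈ K → Ψ x (k * g) = Ψ x g)
    (hP3convex : ∀ (x : M) (v : p),
      ConvexOn ℝ Set.univ fun t : ℝ => Ψ x (expG (t • v)))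
    (hP3strict : ∀ (x : M) (v : p),
      iteratedDeriv 2 (fun t : ℝ => Ψ x (expG (t • v))) 0 = 0 ↔
        ∀ t : ℝ, expG (t • v) • x = x)
    (hP4 : ∀ (x : M) (g h : G), Ψ x g + Ψ (g • x) h = Ψ x (h * g))
    (x : M)
    -- `x` is stable
    (hstable : ∃ g : G,
      (∀ v : p, deriv (fun t : ℝ => Ψ (g • x) (expG (t • v))) 0 = 0) ∧
      ∀ (h : G) (v : p), v ≠ 0 → ¬ (∀ t : ℝ, (h * expG (t • v) * h⁻¹) • x = x)) :
    IsCompact ((MulAction.stabilizer G x : Subgroup G) : Set G) :=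
  stabilizer_compact_of_stable_general K expG Ψ hexp0 hKcompact hclosed hCartan hP1 hP2 hP3convex
    hP3strict hP4 x hstable
end

section
/- If x ∈ M is polystable, then the intersection Gx ∩ F⁻¹(0) consists of exactly one K-orbit: if y ∈ Gx with F(y) = 0 and g·y ∈ F⁻¹(0) for g = k exp(v) ∈ G, then v ∈ g_y, hence g·y ∈ K·y. Consequently the inclusion F⁻¹(0) ↪ M^{ps} induces a bijection F⁻¹(0)/K → M^{ps}/G. -/
/-!
At a zero `y` of the gradient map, `t ↦ Ψ y (exp (t v))` is convex with a critical point at `0`,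
so `Ψ y` attains its minimum `Ψ y (exp 0) = 0` there (and, by the Cartan decomposition and
`K`-invariance, on all of `G`). If `g • y` is also a zero, the cocycle identity
`Ψ y g + Ψ (g • y) g⁻¹ = Ψ y 1 = 0` forces `Ψ y g ≤ 0`. Writing `g = k exp v`, the convex function
`t ↦ Ψ y (exp (t v))` therefore vanishes on `[0, 1]`, so its second derivative at `0` vanishes and
the strict convexity axiom says that `exp (ℝ v)` fixes `y`; hence `g • y = k • y`.
-/

open Set Filter Topology

section Calculus

variable {𝕜 F : Type*} [NontriviallyNormedField 𝕜] [NormedAddCommGroup F] [NormedSpace 𝕜 F]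
  {f : 𝕜 → F} {s : Set 𝕜} {x : 𝕜} {c : F}

theorem deriv_eq_zero_of_eventuallyEq_const (h : f =ᶠ[𝓝[s] x] fun _ => c) (hx : x ∈ s)
    (hs : UniqueDiffWithinAt 𝕜 s x) : deriv f x = 0 := by
  by_cases hf : DifferentiableAt 𝕜 f x
  · rw [← hf.derivWithin hs, h.derivWithin_eq (h.self_of_nhdsWithin hx), derivWithin_fun_const,
      Pi.zero_apply]
  · exact deriv_zero_of_not_differentiableAt hf

theorem deriv_eventuallyEq_zero_of_eventuallyEq_const (hs : UniqueDiffOn 𝕜 s)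
    (h : f =ᶠ[𝓝[s] x] fun _ => c) : deriv f =ᶠ[𝓝[s] x] fun _ => 0 := by
  filter_upwards [eventually_eventually_nhdsWithin.2 h, self_mem_nhdsWithin] with y hy hys
  exact deriv_eq_zero_of_eventuallyEq_const hy hys (hs y hys)

theorem iteratedDeriv_two_eq_zero_of_eventuallyEq_const (hs : UniqueDiffOn 𝕜 s) (hx : x ∈ s)
    (h : f =ᶠ[𝓝[s] x] fun _ => c) : iteratedDeriv 2 f x = 0 := by
  rw [iteratedDeriv_succ, iteratedDeriv_one]
  exact deriv_eq_zero_of_eventuallyEq_const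
    (deriv_eventuallyEq_zero_of_eventuallyEq_const hs h) hx (hs x hx)

end Calculus

theorem ConvexOn.eqOn_Icc_of_le_of_le {𝕜 β : Type*} [Field 𝕜] [LinearOrder 𝕜]
    [IsStrictOrderedRing 𝕜] [AddCommGroup β] [LinearOrder β] [IsOrderedAddMonoid β] [Module 𝕜 β]
    [IsStrictOrderedModule 𝕜 β]
    {s : Set 𝕜} {f : 𝕜 → β} {a b : 𝕜} (hf : ConvexOn 𝕜 s f) (ha : a ∈ s) (hb : b ∈ s)
    (hmin : ∀ z ∈ Icc a b, f a ≤ f z) (hba : f b ≤ f a) : EqOn f (fun _ => f a) (Icc a b) :=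
  fun z hz => le_antisymm ((hf.le_max_of_mem_Icc ha hb hz).trans (max_le le_rfl hba)) (hmin z hz)

section KempfNess

variable {G M p : Type*} [Group G] [MulAction G M] [NormedAddCommGroup p] [NormedSpace ℝ p]

/-- The axioms (P1)–(P5) on a Kempf–Ness function `Ψ`, with the Cartan decomposition
`G = K exp(p)`. -/
structure IsKempfNessFunction (K : Subgroup G) (expG : p → G) (Ψ : M → G → ℝ) : Prop where
  cartan : ∀ g : G, ∃ k ∈ K, ∃ v : p, g = k * expG v
  differentiable : ∀ (x : M) (v : p), Differentiable ℝ fun t : ℝ => Ψ x (expG (t • v))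
  apply_mul_left : ∀ (x : M) (k g : G), k ∈ K → Ψ x (k * g) = Ψ x g
  convexOn : ∀ (x : M) (v : p), ConvexOn ℝ univ fun t : ℝ => Ψ x (expG (t • v))
  iteratedDeriv_two_eq_zero_iff : ∀ (x : M) (v : p),
    iteratedDeriv 2 (fun t : ℝ => Ψ x (expG (t • v))) 0 = 0 ↔ ∀ t : ℝ, expG (t • v) • x = x
  cocycle : ∀ (x : M) (g h : G), Ψ x g + Ψ (g • x) h = Ψ x (h * g)

/-- `F x = 0` for the gradient map `F : M → p*`, `F x v = d/dt|₀ Ψ x (exp (t v))`. -/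
def IsZeroOfKempfNessGradient (expG : p → G) (Ψ : M → G → ℝ) (x : M) : Prop :=
  ∀ v : p, deriv (fun t : ℝ => Ψ x (expG (t • v))) 0 = 0

namespace IsKempfNessFunction

variable {K : Subgroup G} {expG : p → G} {Ψ : M → G → ℝ} {x : M}

theorem apply_one (hΨ : IsKempfNessFunction K expG Ψ) (x : M) : Ψ x 1 = 0 := by
  have h := hΨ.cocycle x 1 1
  rw [one_smul, mul_one] at h
  linarith

theorem exp_zero_smul (hΨ : IsKempfNessFunction K expG Ψ) (x : M) :
    expG 0 • x = x := by
  have hconst : (fun t : ℝ => Ψ x (expG (t • (0 : p)))) =ᶠ[𝓝[univ] 0] fun _ => Ψ x (expG 0) :=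
    Eventually.of_forall fun t => by simp only [smul_zero]
  have h := (hΨ.iteratedDeriv_two_eq_zero_iff x 0).mp
    (iteratedDeriv_two_eq_zero_of_eventuallyEq_const uniqueDiffOn_univ (mem_univ 0) hconst) 1
  rwa [smul_zero] at h

theorem apply_exp_zero_le_apply_exp (hΨ : IsKempfNessFunction K expG Ψ)
    (hx : IsZeroOfKempfNessGradient expG Ψ x) (v : p) : Ψ x (expG 0) ≤ Ψ x (expG v) := by
  have hmin := (hΨ.convexOn x v).isMinOn_of_rightDeriv_eq_zero (by simp)
    (((hΨ.differentiable x v 0).derivWithin (uniqueDiffWithinAt_Ioi 0)).trans (hx v))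
  simpa only [zero_smul, one_smul] using isMinOn_iff.mp hmin 1 (mem_univ 1)

theorem apply_exp_zero_le (hΨ : IsKempfNessFunction K expG Ψ)
    (hx : IsZeroOfKempfNessGradient expG Ψ x) (g : G) : Ψ x (expG 0) ≤ Ψ x g := by
  obtain ⟨k, hk, v, rfl⟩ := hΨ.cartan g
  rw [hΨ.apply_mul_left x k _ hk]
  exact hΨ.apply_exp_zero_le_apply_exp hx v

-- `expG 0 = 1` is not assumed: the lower bound needs that `expG 0` acts trivially.
theorem apply_exp_zero (hΨ : IsKempfNessFunction K expG Ψ)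
    (hx : IsZeroOfKempfNessGradient expG Ψ x) : Ψ x (expG 0) = 0 := by
  refine le_antisymm ?_ ?_
  · obtain ⟨k, hk, v, h1⟩ := hΨ.cartan 1
    calc Ψ x (expG 0) ≤ Ψ x (expG v) := hΨ.apply_exp_zero_le_apply_exp hx v
      _ = 0 := by rw [← hΨ.apply_mul_left x k _ hk, ← h1, hΨ.apply_one]
  · have h := hΨ.cocycle x (expG 0) (expG 0)
    rw [hΨ.exp_zero_smul] at h
    linarith [hΨ.apply_exp_zero_le hx (expG 0 * expG 0)]

theorem apply_nonneg (hΨ : IsKempfNessFunction K expG Ψ)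
    (hx : IsZeroOfKempfNessGradient expG Ψ x) (g : G) : 0 ≤ Ψ x g :=
  hΨ.apply_exp_zero hx ▸ hΨ.apply_exp_zero_le hx g

theorem apply_nonpos (hΨ : IsKempfNessFunction K expG Ψ)
    (g : G) (hgx : IsZeroOfKempfNessGradient expG Ψ (g • x)) : Ψ x g ≤ 0 := by
  have h := hΨ.cocycle x g g⁻¹
  rw [inv_mul_cancel, hΨ.apply_one] at h
  linarith [hΨ.apply_nonneg hgx g⁻¹]

theorem exp_smul_eq_self (hΨ : IsKempfNessFunction K expG Ψ)
    {g k : G} {v : p} (hx : IsZeroOfKempfNessGradient expG Ψ x)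
    (hgx : IsZeroOfKempfNessGradient expG Ψ (g • x)) (hk : k ∈ K) (hg : g = k * expG v) (t : ℝ) :
    expG (t • v) • x = x := by
  set ψ : ℝ → ℝ := fun t => Ψ x (expG (t • v))
  have hψ0 : ψ 0 = 0 := by simpa only [ψ, zero_smul] using hΨ.apply_exp_zero hx
  have hψ1 : ψ 1 ≤ 0 := by
    simp only [ψ, one_smul]
    rw [← hΨ.apply_mul_left x k _ hk, ← hg]
    exact hΨ.apply_nonpos g hgx
  have hconst : EqOn ψ (fun _ => ψ 0) (Icc 0 1) :=
    (hΨ.convexOn x v).eqOn_Icc_of_le_of_le (mem_univ 0) (mem_univ 1)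
      (fun _ _ => hψ0.trans_le (hΨ.apply_nonneg hx _)) (hψ1.trans hψ0.ge)
  exact (hΨ.iteratedDeriv_two_eq_zero_iff x v).mp
    (iteratedDeriv_two_eq_zero_of_eventuallyEq_const (uniqueDiffOn_Ici 0) self_mem_Ici
      (hconst.eventuallyEq_of_mem (Icc_mem_nhdsGE zero_lt_one))) t

end IsKempfNessFunction

end KempfNess

theorem polystable_fiber_is_one_K_orbit_general
    {G M p : Type*} [Group G] [MulAction G M]
    [NormedAddCommGroup p] [NormedSpace ℝ p]
    (K : Subgroup G) (expG : p → G) (Ψ : M → G → ℝ)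
    (hCartan : ∀ g : G, ∃ k ∈ K, ∃ v : p, g = k * expG v)
    (hP1 : ∀ (x : M) (v : p), Differentiable ℝ fun t : ℝ => Ψ x (expG (t • v)))
    (hP2 : ∀ (x : M) (k g : G), k ∈ K → Ψ x (k * g) = Ψ x g)
    (hP3convex : ∀ (x : M) (v : p),
      ConvexOn ℝ Set.univ fun t : ℝ => Ψ x (expG (t • v)))
    (hP3strict : ∀ (x : M) (v : p),
      iteratedDeriv 2 (fun t : ℝ => Ψ x (expG (t • v))) 0 = 0 ↔
        ∀ t : ℝ, expG (t • v) • x = x)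
    (hP4 : ∀ (x : M) (g h : G), Ψ x g + Ψ (g • x) h = Ψ x (h * g))
    (y : M)
    -- `F(y) = 0`
    (hFy : ∀ v : p, deriv (fun t : ℝ => Ψ y (expG (t • v))) 0 = 0) :
    ∀ g : G,
      -- if also `F(g·y) = 0` ...
      (∀ v : p, deriv (fun t : ℝ => Ψ (g • y) (expG (t • v))) 0 = 0) →
      -- ... then in any Cartan decomposition `g = k exp(v)` the factor `exp(ℝv)`
      -- fixes `y`, and `g·y` lies in the `K`-orbit of `y`
      (∀ k ∈ K, ∀ v : p, g = k * expG v → ∀ t : ℝ, expG (t • v) • y = y) ∧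
        ∃ k ∈ K, g • y = k • y := by
  intro g hFgy
  have hΨ : IsKempfNessFunction K expG Ψ := ⟨hCartan, hP1, hP2, hP3convex, hP3strict, hP4⟩
  have hfix : ∀ k ∈ K, ∀ v : p, g = k * expG v → ∀ t : ℝ, expG (t • v) • y = y :=
    fun k hk v hg => hΨ.exp_smul_eq_self hFy hFgy hk hg
  refine ⟨hfix, ?_⟩
  obtain ⟨k, hk, v, hg⟩ := hCartan g
  refine ⟨k, hk, ?_⟩
  have hv : expG v • y = y := by simpa only [one_smul] using hfix k hk v hg 1
  rw [hg, mul_smul, hv]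

/-- If `x` is polystable then `Gx ∩ F⁻¹(0)` is a single `K`-orbit:
if `F(y) = 0` with `y ∈ Gx`, and `g = k·exp(v)` satisfies `F(g·y) = 0`, then
`exp(ℝv)` fixes `y` and `g·y ∈ K·y`.  Consequently the inclusion
`F⁻¹(0) ↪ M^{ps}` induces a bijection `F⁻¹(0)/K → M^{ps}/G`. -/
theorem polystable_fiber_is_one_K_orbit
    {G M p : Type*} [Group G] [MulAction G M]
    [NormedAddCommGroup p] [NormedSpace ℝ p]
    (K : Subgroup G) (expG : p → G) (Ad : G → p →ₗ[ℝ] p) (Ψ : M → G → ℝ)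
    (hCartan : ∀ g : G, ∃ k ∈ K, ∃ v : p, g = k * expG v)
    (hAd : ∀ k : G, k ∈ K → ∀ v : p, k⁻¹ * expG v * k = expG (Ad k⁻¹ v))
    (hP1 : ∀ (x : M) (v : p), Differentiable ℝ fun t : ℝ => Ψ x (expG (t • v)))
    (hP2 : ∀ (x : M) (k g : G), k ∈ K → Ψ x (k * g) = Ψ x g)
    (hP3convex : ∀ (x : M) (v : p),
      ConvexOn ℝ Set.univ fun t : ℝ => Ψ x (expG (t • v)))
    (hP3strict : ∀ (x : M) (v : p),
      iteratedDeriv 2 (fun t : ℝ => Ψ x (expG (t • v))) 0 = 0 ↔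
        ∀ t : ℝ, expG (t • v) • x = x)
    (hP4 : ∀ (x : M) (g h : G), Ψ x g + Ψ (g • x) h = Ψ x (h * g))
    (y : M)
    -- `F(y) = 0`
    (hFy : ∀ v : p, deriv (fun t : ℝ => Ψ y (expG (t • v))) 0 = 0) :
    ∀ g : G,
      -- if also `F(g·y) = 0` ...
      (∀ v : p, deriv (fun t : ℝ => Ψ (g • y) (expG (t • v))) 0 = 0) →
      -- ... then in any Cartan decomposition `g = k exp(v)` the factor `exp(ℝv)`
      -- fixes `y`, and `g·y` lies in the `K`-orbit of `y`
      (∀ k ∈ K, ∀ v : p, g = k * expG v → ∀ t : ℝ, expG (t • v) • y = y) ∧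
        ∃ k ∈ K, g • y = k • y :=
  polystable_fiber_is_one_K_orbit_general K expG Ψ hCartan hP1 hP2 hP3convex hP3strict hP4 y hFy
end

section
/- A probability measure ν on ℙ¹(ℝ) is SL(2,ℝ)-polystable but not stable if and only if ν = (1/2)δ_{p₁} + (1/2)δ_{p₂} for two distinct points p₁ ≠ p₂ in ℙ¹(ℝ). -/
open MeasureTheory Matrix LinearAlgebra.Projectivization
open scoped LinearAlgebra.Projectivization

noncomputable section

instance : TopologicalSpace (ℙ ℝ (Fin 2 → ℝ)) :=
  inferInstanceAs (TopologicalSpace (Quotient _))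

instance : MeasurableSpace (ℙ ℝ (Fin 2 → ℝ)) := borel _

/-- The gradient map `μ_p([x]) = ½[xxᵀ/|x|² − Id/2]` of the `SL(2,ℝ)`-action on
`ℙ¹(ℝ)`. -/
def muP1 (q : ℙ ℝ (Fin 2 → ℝ)) : Matrix (Fin 2) (Fin 2) ℝ :=
  (2:ℝ)⁻¹ • ((q.rep ⬝ᵥ q.rep)⁻¹ • vecMulVec q.rep q.rep -
    (2:ℝ)⁻¹ • (1 : Matrix (Fin 2) (Fin 2) ℝ))

/-!
For `u ≠ 0` let `cosSq u q` be the squared cosine of the angle between `u` and the line `q`.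
Since `cosSq u q = 1/2 + 2 uᵀ μ_q u / |u|²`, a measure with `F(μ) = 0` has `∫ cosSq u dμ = 1/2`.
If moreover `μ{[u]} ≥ 1/2`, then `cosSq u ≥ 0` and `cosSq u [u] = 1` force `μ{[u]} = 1/2` and
`cosSq u = 0` almost everywhere off `[u]`, i.e. the other half of the mass sits on `[u⊥]`.
Non-stability is `SL(2,ℝ)`-invariant, so this applies to the translate `g_*ν`.
Conversely, `SL(2,ℝ)` acts 2-transitively on `ℙ¹(ℝ)`, so some `g` moves `p₁, p₂` to an
orthogonal pair `[u], [u⊥]`, and `μ_[u] + μ_[u⊥] = 0`.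
-/

open Projectivization Set
open scoped ENNReal

instance : BorelSpace (ℙ ℝ (Fin 2 → ℝ)) := ⟨rfl⟩

lemma map_half_dirac_add_half_dirac {α β : Type*} [MeasurableSpace α] [MeasurableSpace β]
    {f : α → β} (hf : Measurable f) (a b : α) :
    ((2 : ℝ≥0∞)⁻¹ • Measure.dirac a + (2 : ℝ≥0∞)⁻¹ • Measure.dirac b).map f =
      (2 : ℝ≥0∞)⁻¹ • Measure.dirac (f a) + (2 : ℝ≥0∞)⁻¹ • Measure.dirac (f b) := by
  rw [Measure.map_add _ _ hf, Measure.map_smul, Measure.map_smul, Measure.map_dirac' hf,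
    Measure.map_dirac' hf]

section SingletonMeasures

variable {α : Type*} [MeasurableSpace α] [MeasurableSingletonClass α] {μ : Measure α}

lemma measureReal_singleton_eq_and_ae_eq_zero_of_integral_le {f : α → ℝ} {a : α}
    (hf : Integrable f μ) (hf₀ : 0 ≤ f) (hfa : f a = 1) (h : ∫ x, f x ∂μ ≤ μ.real {a}) :
    μ.real {a} = ∫ x, f x ∂μ ∧ ∀ᵐ x ∂μ, x ≠ a → f x = 0 := by
  have hsplit := integral_add_compl (measurableSet_singleton a) hf
  rw [integral_singleton, hfa, smul_eq_mul, mul_one] at hsplit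
  have hcompl : ∫ x in {a}ᶜ, f x ∂μ = 0 := le_antisymm (by linarith) (integral_nonneg hf₀)
  refine ⟨by linarith, ?_⟩
  exact (ae_restrict_iff' (measurableSet_singleton a).compl).1
    ((integral_eq_zero_iff_of_nonneg hf₀ hf.restrict).1 hcompl)

lemma eq_half_dirac_add_half_dirac [IsProbabilityMeasure μ] {a b : α} (hab : a ≠ b)
    (ha : μ {a} = 2⁻¹) (hμ : ∀ᵐ x ∂μ, x = a ∨ x = b) :
    μ = (2 : ℝ≥0∞)⁻¹ • Measure.dirac a + (2 : ℝ≥0∞)⁻¹ • Measure.dirac b := by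
  have hsum : μ = μ {a} • Measure.dirac a + μ {b} • Measure.dirac b := by
    rw [← Measure.restrict_singleton, ← Measure.restrict_singleton,
      ← Measure.restrict_union (disjoint_singleton.2 hab) (measurableSet_singleton b),
      singleton_union, Measure.restrict_eq_self_of_ae_mem (s := {a, b}) hμ]
  have hb : μ {b} = 2⁻¹ := by
    have htotal := congrArg (fun ρ : Measure α => ρ univ) hsum
    simp only [Measure.add_apply, Measure.smul_apply, measure_univ, smul_eq_mul, mul_one,
      ha] at htotal
    rw [← ENNReal.inv_two_add_inv_two] at htotal
    exact ((ENNReal.add_right_inj (by norm_num)).1 htotal).symm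
  rwa [ha, hb] at hsum

lemma integral_half_dirac_add_half_dirac (f : α → ℝ) (a b : α) :
    ∫ x, f x ∂((2 : ℝ≥0∞)⁻¹ • Measure.dirac a + (2 : ℝ≥0∞)⁻¹ • Measure.dirac b) =
      2⁻¹ * (f a + f b) := by
  rw [integral_add_measure, integral_smul_measure, integral_smul_measure, integral_dirac,
    integral_dirac]
  · simp [mul_add]
  all_goals exact (integrable_dirac enorm_lt_top).smul_measure (by simp)

end SingletonMeasures

section QuadraticForms

variable {α ι : Type*} [MeasurableSpace α] [Fintype ι] {μ : Measure α}

lemma dotProduct_self_pos {v : ι → ℝ} (hv : v ≠ 0) : 0 < v ⬝ᵥ v :=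
  dotProduct_self_star_pos_iff.2 hv

lemma abs_mul_le_dotProduct_self (v : ι → ℝ) (i j : ι) : |v i * v j| ≤ v ⬝ᵥ v := by
  have hle : ∀ k, v k * v k ≤ v ⬝ᵥ v := fun k =>
    Finset.single_le_sum (f := fun k => v k * v k) (fun k _ => mul_self_nonneg (v k))
      (Finset.mem_univ k)
  rw [abs_le]
  constructor <;> nlinarith [hle i, hle j, sq_nonneg (v i + v j), sq_nonneg (v i - v j)]

lemma dotProduct_mulVec_eq_sum (M : Matrix ι ι ℝ) (u w : ι → ℝ) :
    u ⬝ᵥ (M *ᵥ w) = ∑ i, ∑ j, u i * w j * M i j := by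
  simp only [dotProduct, mulVec, Finset.mul_sum]
  exact Finset.sum_congr rfl fun i _ => Finset.sum_congr rfl fun j _ => by ring

lemma integrable_dotProduct_mulVec {M : α → Matrix ι ι ℝ}
    (hM : ∀ i j, Integrable (fun x => M x i j) μ) (u w : ι → ℝ) :
    Integrable (fun x => u ⬝ᵥ (M x *ᵥ w)) μ := by
  simp only [dotProduct_mulVec_eq_sum]
  exact integrable_finsetSum _ fun i _ => integrable_finsetSum _ fun j _ =>
    (hM i j).const_mul _

lemma integral_dotProduct_mulVec_eq_zero {M : α → Matrix ι ι ℝ}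
    (hM : ∀ i j, Integrable (fun x => M x i j) μ) (h₀ : ∀ i j, ∫ x, M x i j ∂μ = 0)
    (u w : ι → ℝ) : ∫ x, u ⬝ᵥ (M x *ᵥ w) ∂μ = 0 := by
  simp only [dotProduct_mulVec_eq_sum]
  rw [integral_finsetSum _ fun i _ => integrable_finsetSum _ fun j _ => (hM i j).const_mul _]
  refine Finset.sum_eq_zero fun i _ => ?_
  rw [integral_finsetSum _ fun j _ => (hM i j).const_mul _]
  exact Finset.sum_eq_zero fun j _ => by rw [integral_const_mul, h₀, mul_zero]

end QuadraticForms

lemma sq_add_sq_ne_zero {v : Fin 2 → ℝ} (hv : v ≠ 0) : v 0 ^ 2 + v 1 ^ 2 ≠ 0 := by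
  simpa [dotProduct, Fin.sum_univ_two, sq] using (dotProduct_self_pos hv).ne'

def perp (u : Fin 2 → ℝ) : Fin 2 → ℝ := ![-u 1, u 0]

lemma dotProduct_perp (u : Fin 2 → ℝ) : u ⬝ᵥ perp u = 0 := by
  simp [perp, dotProduct, Fin.sum_univ_two, mul_comm]

lemma perp_dotProduct_perp (u : Fin 2 → ℝ) : perp u ⬝ᵥ perp u = u ⬝ᵥ u := by
  simp [perp, dotProduct, Fin.sum_univ_two, add_comm]

lemma perp_perp (u : Fin 2 → ℝ) : perp (perp u) = -u := by
  ext i; fin_cases i <;> simp [perp]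

lemma perp_ne_zero {u : Fin 2 → ℝ} (hu : u ≠ 0) : perp u ≠ 0 := fun h =>
  hu (dotProduct_self_eq_zero.1 (by rw [← perp_dotProduct_perp, h, zero_dotProduct]))

lemma exists_smul_perp_eq {u w : Fin 2 → ℝ} (hu : u ≠ 0) (huw : u ⬝ᵥ w = 0) :
    ∃ a : ℝ, a • perp u = w := by
  have hU := sq_add_sq_ne_zero hu
  simp only [dotProduct, Fin.sum_univ_two] at huw
  refine ⟨(perp u ⬝ᵥ w) / (u ⬝ᵥ u), ?_⟩
  ext i
  fin_cases i
  · simp only [perp, dotProduct, Fin.sum_univ_two, Fin.zero_eta, Pi.smul_apply, smul_eq_mul,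
      cons_val_zero, cons_val_one, cons_val_fin_one]
    field_simp
    linear_combination (-u 0) * huw
  · simp only [perp, dotProduct, Fin.sum_univ_two, Fin.mk_one, Pi.smul_apply, smul_eq_mul,
      cons_val_zero, cons_val_one, cons_val_fin_one]
    field_simp
    linear_combination (-u 1) * huw

def cosSq (u : Fin 2 → ℝ) : ℙ ℝ (Fin 2 → ℝ) → ℝ :=
  Projectivization.lift
    (fun w : {w : Fin 2 → ℝ // w ≠ 0} => (u ⬝ᵥ w.1) ^ 2 / ((u ⬝ᵥ u) * (w.1 ⬝ᵥ w.1)))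
    fun w w' t h => by
      have ht : t ≠ 0 := left_ne_zero_of_smul (h ▸ w.2)
      simp only [h, dotProduct_smul, smul_dotProduct, smul_eq_mul]
      rw [show (t * (u ⬝ᵥ w'.1)) ^ 2 = t ^ 2 * (u ⬝ᵥ w'.1) ^ 2 by ring,
        show u ⬝ᵥ u * (t * (t * (w'.1 ⬝ᵥ w'.1))) = t ^ 2 * (u ⬝ᵥ u * (w'.1 ⬝ᵥ w'.1)) by ring,
        mul_div_mul_left _ _ (pow_ne_zero 2 ht)]

lemma cosSq_mk (u : Fin 2 → ℝ) {w : Fin 2 → ℝ} (hw : w ≠ 0) :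
    cosSq u (mk ℝ w hw) = (u ⬝ᵥ w) ^ 2 / ((u ⬝ᵥ u) * (w ⬝ᵥ w)) :=
  rfl

lemma cosSq_nonneg (u : Fin 2 → ℝ) (q : ℙ ℝ (Fin 2 → ℝ)) : 0 ≤ cosSq u q := by
  induction q using Projectivization.ind with | h w hw =>
  rw [cosSq_mk]
  exact div_nonneg (sq_nonneg _)
    (mul_nonneg (dotProduct_self_star_nonneg u) (dotProduct_self_star_nonneg w))

lemma cosSq_mk_self {u : Fin 2 → ℝ} (hu : u ≠ 0) : cosSq u (mk ℝ u hu) = 1 := by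
  rw [cosSq_mk, ← sq, div_self (pow_ne_zero 2 (dotProduct_self_pos hu).ne')]

lemma cosSq_eq_zero_iff {u : Fin 2 → ℝ} (hu : u ≠ 0) {q : ℙ ℝ (Fin 2 → ℝ)} :
    cosSq u q = 0 ↔ q = mk ℝ (perp u) (perp_ne_zero hu) := by
  induction q using Projectivization.ind with | h w hw =>
  rw [cosSq_mk, div_eq_zero_iff, mk_eq_mk_iff', or_iff_left
    (mul_pos (dotProduct_self_pos hu) (dotProduct_self_pos hw)).ne', sq_eq_zero_iff]
  refine ⟨exists_smul_perp_eq hu, ?_⟩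
  rintro ⟨a, rfl⟩
  rw [dotProduct_smul, dotProduct_perp, smul_zero]

lemma mk_ne_mk_perp {u : Fin 2 → ℝ} (hu : u ≠ 0) :
    mk ℝ u hu ≠ mk ℝ (perp u) (perp_ne_zero hu) := fun h =>
  one_ne_zero <| (cosSq_mk_self hu).symm.trans <| (cosSq_eq_zero_iff hu).2 h

lemma muP1_mk {v : Fin 2 → ℝ} (hv : v ≠ 0) :
    muP1 (mk ℝ v hv) = (2 : ℝ)⁻¹ • ((v ⬝ᵥ v)⁻¹ • vecMulVec v v - (2 : ℝ)⁻¹ • 1) := by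
  obtain ⟨a, ha⟩ := exists_smul_eq_mk_rep ℝ v hv
  rw [muP1, ← ha, Units.smul_def, smul_vecMulVec, vecMulVec_smul, smul_dotProduct,
    dotProduct_smul, smul_smul, smul_smul, smul_eq_mul, smul_eq_mul]
  have hV := (dotProduct_self_pos hv).ne'
  have ha₀ := a.ne_zero
  congr 3
  field_simp

lemma cosSq_eq_inv_two_add {u : Fin 2 → ℝ} (hu : u ≠ 0) (q : ℙ ℝ (Fin 2 → ℝ)) :
    cosSq u q = 2⁻¹ + 2 * (u ⬝ᵥ (muP1 q *ᵥ u)) / (u ⬝ᵥ u) := by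
  induction q using Projectivization.ind with | h w hw =>
  have hU := sq_add_sq_ne_zero hu
  have hW := sq_add_sq_ne_zero hw
  rw [cosSq_mk, muP1_mk]
  simp only [dotProduct, mulVec, vecMulVec, Fin.sum_univ_two, Matrix.smul_apply,
    Matrix.sub_apply, of_apply, smul_of, Pi.smul_apply, smul_eq_mul, one_apply, Fin.isValue,
    zero_ne_one, one_ne_zero, ↓reduceIte, mul_one, mul_zero, sub_zero, ← sq]
  field_simp
  ring

lemma vecMulVec_add_vecMulVec_perp (u : Fin 2 → ℝ) :
    vecMulVec u u + vecMulVec (perp u) (perp u) = (u ⬝ᵥ u) • 1 := by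
  ext i j
  fin_cases i <;> fin_cases j <;>
    simp [perp, vecMulVec, dotProduct, Fin.sum_univ_two, add_comm, mul_comm]

lemma muP1_mk_add_muP1_mk_perp {u : Fin 2 → ℝ} (hu : u ≠ 0) :
    muP1 (mk ℝ u hu) + muP1 (mk ℝ (perp u) (perp_ne_zero hu)) = 0 := calc
  _ = (2 : ℝ)⁻¹ • ((u ⬝ᵥ u)⁻¹ • (vecMulVec u u + vecMulVec (perp u) (perp u)) - 1) := by
    rw [muP1_mk, muP1_mk, perp_dotProduct_perp]
    module
  _ = 0 := by
    rw [vecMulVec_add_vecMulVec_perp, smul_smul, inv_mul_cancel₀ (dotProduct_self_pos hu).ne',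
      one_smul, sub_self, smul_zero]

lemma continuous_projectivization_mk :
    Continuous fun w : {w : Fin 2 → ℝ // w ≠ 0} => mk ℝ w.1 w.2 :=
  continuous_quotient_mk'

lemma continuous_of_continuous_comp_mk {X : Type*} [TopologicalSpace X]
    {f : ℙ ℝ (Fin 2 → ℝ) → X}
    (hf : Continuous fun w : {w : Fin 2 → ℝ // w ≠ 0} => f (mk ℝ w.1 w.2)) : Continuous f :=
  isQuotientMap_quotient_mk'.continuous_iff.2 hf

@[fun_prop]
lemma continuous_muP1 : Continuous muP1 := by
  refine continuous_of_continuous_comp_mk ?_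
  simp only [muP1_mk]
  have hinv : Continuous fun w : {w : Fin 2 → ℝ // w ≠ 0} => (w.1 ⬝ᵥ w.1)⁻¹ :=
    (continuous_subtype_val.dotProduct continuous_subtype_val).inv₀
      fun w => (dotProduct_self_pos w.2).ne'
  fun_prop

lemma continuous_cosSq {u : Fin 2 → ℝ} (hu : u ≠ 0) : Continuous (cosSq u) := by
  simp only [funext (cosSq_eq_inv_two_add hu)]
  fun_prop

instance : T1Space (ℙ ℝ (Fin 2 → ℝ)) where
  t1 q := by
    induction q using Projectivization.ind with | h v hv =>
    have hmk : mk ℝ (perp (perp v)) (perp_ne_zero (perp_ne_zero hv)) = mk ℝ v hv :=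
      (mk_eq_mk_iff' ℝ _ _ _ _).2 ⟨-1, by rw [perp_perp, neg_one_smul]⟩
    have hset : {mk ℝ v hv} = cosSq (perp v) ⁻¹' {0} := by
      ext q
      rw [mem_preimage, mem_singleton_iff, mem_singleton_iff,
        cosSq_eq_zero_iff (perp_ne_zero hv), hmk]
    rw [hset]
    exact isClosed_singleton.preimage (continuous_cosSq (perp_ne_zero hv))

instance : ContinuousConstSMul (SpecialLinearGroup (Fin 2) ℝ) (ℙ ℝ (Fin 2 → ℝ)) where
  continuous_const_smul g := continuous_of_continuous_comp_mk <| by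
    simp only [smul_mk]
    exact continuous_projectivization_mk.comp <|
      (continuous_const.matrix_mulVec continuous_subtype_val).subtype_mk
        fun w => (smul_ne_zero_iff_ne g).2 w.2

lemma abs_muP1_apply_le_one (q : ℙ ℝ (Fin 2 → ℝ)) (i j : Fin 2) : |muP1 q i j| ≤ 1 := by
  induction q using Projectivization.ind with | h v hv =>
  have hV := dotProduct_self_pos hv
  have hx : |(v ⬝ᵥ v)⁻¹ * (v i * v j)| ≤ 1 := by
    rw [abs_mul, abs_inv, abs_of_pos hV, inv_mul_le_iff₀ hV, mul_one]
    exact abs_mul_le_dotProduct_self v i j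
  rw [muP1_mk]
  simp only [Matrix.smul_apply, Matrix.sub_apply, vecMulVec_apply, one_apply, smul_eq_mul]
  rw [abs_le] at hx ⊢
  split_ifs <;> constructor <;> linarith [hx.1, hx.2]

section IntegralsOnP1

variable {μ : Measure (ℙ ℝ (Fin 2 → ℝ))}

lemma integrable_muP1_apply [IsFiniteMeasure μ] (i j : Fin 2) :
    Integrable (fun q => muP1 q i j) μ :=
  .of_bound ((continuous_apply_apply i j).comp continuous_muP1).aestronglyMeasurable 1
    (ae_of_all _ fun q => abs_muP1_apply_le_one q i j)

lemma integrable_cosSq [IsFiniteMeasure μ] {u : Fin 2 → ℝ} (hu : u ≠ 0) :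
    Integrable (cosSq u) μ := by
  simp only [funext (cosSq_eq_inv_two_add hu)]
  exact (integrable_const _).add
    (((integrable_dotProduct_mulVec integrable_muP1_apply u u).const_mul 2).div_const _)

lemma integral_cosSq [IsProbabilityMeasure μ] (h₀ : ∀ i j : Fin 2, ∫ q, muP1 q i j ∂μ = 0)
    {u : Fin 2 → ℝ} (hu : u ≠ 0) : ∫ q, cosSq u q ∂μ = 2⁻¹ := by
  simp only [cosSq_eq_inv_two_add hu]
  rw [integral_add (integrable_const _)
    (((integrable_dotProduct_mulVec integrable_muP1_apply u u).const_mul 2).div_const _),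
    integral_div, integral_const_mul, integral_dotProduct_mulVec_eq_zero integrable_muP1_apply h₀]
  simp

lemma eq_half_dirac_add_half_dirac_of_integral_muP1_eq_zero [IsProbabilityMeasure μ]
    (h₀ : ∀ i j : Fin 2, ∫ q, muP1 q i j ∂μ = 0) {p : ℙ ℝ (Fin 2 → ℝ)} (hp : 2⁻¹ ≤ μ {p}) :
    ∃ p', p ≠ p' ∧ μ = (2 : ℝ≥0∞)⁻¹ • Measure.dirac p + (2 : ℝ≥0∞)⁻¹ • Measure.dirac p' := by
  induction p using Projectivization.ind with | h u hu =>
  have hp' : ∫ q, cosSq u q ∂μ ≤ μ.real {mk ℝ u hu} := by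
    rw [integral_cosSq h₀ hu]
    simpa [measureReal_def] using ENNReal.toReal_mono (measure_ne_top μ _) hp
  obtain ⟨hμu, hae⟩ := measureReal_singleton_eq_and_ae_eq_zero_of_integral_le
    (integrable_cosSq hu) (cosSq_nonneg u) (cosSq_mk_self hu) hp'
  refine ⟨_, mk_ne_mk_perp hu, eq_half_dirac_add_half_dirac (mk_ne_mk_perp hu) ?_ ?_⟩
  · rw [← ENNReal.ofReal_toReal (measure_ne_top μ _), ← measureReal_def, hμu,
      integral_cosSq h₀ hu]
    simp
  · exact hae.mono fun q hq => or_iff_not_imp_left.2 fun hne => (cosSq_eq_zero_iff hu).1 (hq hne)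

end IntegralsOnP1

/-- A probability measure `ν` on `ℙ¹(ℝ)` is `SL(2,ℝ)`-polystable
(some translate `g_*ν` satisfies `F(g_*ν) = ∫ μ_p d(g_*ν) = 0`) but not stable
(stability being `ν({p}) < 1/2` for every point `p`) if and only if
`ν = ½δ_{p₁} + ½δ_{p₂}` for two distinct points `p₁ ≠ p₂`. -/
theorem polystable_not_stable_measures_on_P1
    (hinj : ∀ g : Matrix.SpecialLinearGroup (Fin 2) ℝ,
      Function.Injective (Matrix.toLin' (g : Matrix (Fin 2) (Fin 2) ℝ)))
    (ν : Measure (ℙ ℝ (Fin 2 → ℝ))) [IsProbabilityMeasure ν] :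
    -- polystable ...
    ((∃ g : Matrix.SpecialLinearGroup (Fin 2) ℝ, ∀ i j : Fin 2,
        (∫ q, muP1 q i j
          ∂(ν.map (Projectivization.map
              (Matrix.toLin' (g : Matrix (Fin 2) (Fin 2) ℝ)) (hinj g)))) = 0) ∧
      -- ... but not stable
      ¬ (∀ q : ℙ ℝ (Fin 2 → ℝ), ν {q} < 1/2))
    ↔ ∃ p₁ p₂ : ℙ ℝ (Fin 2 → ℝ), p₁ ≠ p₂ ∧
        ν = (2:ENNReal)⁻¹ • Measure.dirac p₁ + (2:ENNReal)⁻¹ • Measure.dirac p₂ := by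
  constructor
  · rintro ⟨⟨g, hg⟩, hns⟩
    obtain ⟨q, hq⟩ := not_forall.1 hns
    have hgq : 2⁻¹ ≤ ν.map (g • ·) {g • q} := by
      rw [Measure.map_apply (measurable_const_smul g) (measurableSet_singleton _), preimage_smul,
        smul_set_singleton, inv_smul_smul, ← one_div]
      exact not_lt.1 hq
    have := Measure.isProbabilityMeasure_map (μ := ν) (measurable_const_smul g).aemeasurable
    obtain ⟨p', hne, hμ⟩ :=
      eq_half_dirac_add_half_dirac_of_integral_muP1_eq_zero (μ := ν.map (g • ·)) hg hgq
    refine ⟨q, g⁻¹ • p', fun h => hne (by rw [h, smul_inv_smul]), ?_⟩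
    calc ν = (ν.map (g • ·)).map (g⁻¹ • ·) := by
          rw [Measure.map_map (measurable_const_smul _) (measurable_const_smul _)]
          simp [Function.comp_def]
      _ = _ := by rw [hμ, map_half_dirac_add_half_dirac (measurable_const_smul _), inv_smul_smul]
  · rintro ⟨p₁, p₂, hne, rfl⟩
    refine ⟨?_, fun h => (h p₁).ne ?_⟩
    · obtain ⟨u, hu⟩ := exists_ne (0 : Fin 2 → ℝ)
      obtain ⟨g, hg₁, hg₂⟩ :=
        MulAction.is_two_pretransitive_iff (G := SpecialLinearGroup (Fin 2) ℝ) |>.1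
          inferInstance hne (mk_ne_mk_perp hu)
      refine ⟨g, fun i j => ?_⟩
      change ∫ q, muP1 q i j ∂(Measure.map (g • ·) _) = 0
      rw [map_half_dirac_add_half_dirac (measurable_const_smul g), hg₁, hg₂,
        integral_half_dirac_add_half_dirac, ← Matrix.add_apply, muP1_mk_add_muP1_mk_perp]
      simp
    · simp [hne.symm]

end
end
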